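/- arXiv:2107.03211 — 3 statements merged into one kernel-verified Lean document; each statement's English description precedes it below -/
import Mathlib

section
/- If X and Y are infinite compact Hausdorff spaces, then C_p(X×Y) is not isomorphic (linearly homeomorphic) to C_p(X, C_p(Y)). -/
open Filter Topology

set_option linter.unusedVariables false

/-- `C_p(X, E)`: the submodule of `X → E` (with the product, i.e. pointwise, topology)
consisting of all continuous functions from `X` to `E`.  The coerced type `↥(Cp X E)` carries
the subspace topology, i.e. the topology of pointwise convergence. -/
def Cp (X E : Type*) [TopologicalSpace X] [TopologicalSpace E]
    [AddCommGroup E] [Module ℝ E] [ContinuousAdd E] [ContinuousSMul ℝ E] :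
    Submodule ℝ (X → E) where
  carrier := {f | Continuous f}
  add_mem' hf hg := hf.add hg
  zero_mem' := continuous_const
  smul_mem' c f hf := hf.const_smul c

/-- `(c₀)_p`: the space of real sequences converging to `0`, as a submodule of `ℕ → ℝ`;
the coerced type carries the topology of pointwise convergence inherited from `ℝ^ℕ`. -/
def c0p : Submodule ℝ (ℕ → ℝ) where
  carrier := {x | Tendsto x atTop (𝓝 0)}
  add_mem' hx hy := by
    have h := Filter.Tendsto.add hx hy
    rw [add_zero] at h
    exact h
  zero_mem' := tendsto_const_nhds
  smul_mem' c x hx := by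
    have h := Filter.Tendsto.const_smul hx c
    rw [smul_zero] at h
    exact h

/-- A topological vector space `E` contains a complemented copy of `F`: there is a closed
linear subspace `E₁` of `E` which is linearly homeomorphic to `F` and a continuous linear
projection from `E` onto `E₁`. -/
def HasComplementedCopy (E : Type*) [TopologicalSpace E] [AddCommGroup E] [Module ℝ E]
    (F : Type*) [TopologicalSpace F] [AddCommGroup F] [Module ℝ F] : Prop :=
  ∃ E₁ : Submodule ℝ E, IsClosed (E₁ : Set E) ∧ Nonempty (E₁ ≃L[ℝ] F) ∧
    ∃ P : E →L[ℝ] E, Set.range P = (E₁ : Set E) ∧ ∀ x ∈ E₁, P x = x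

/-- A function `f : X × Y → ℝ` is separately continuous. -/
def SepCont {X Y : Type*} [TopologicalSpace X] [TopologicalSpace Y] (f : X × Y → ℝ) : Prop :=
  (∀ x, Continuous fun y => f (x, y)) ∧ (∀ y, Continuous fun x => f (x, y))

/-- `SC_p(X × Y)`: the submodule of `X × Y → ℝ` consisting of all separately continuous
functions; the coerced type carries the topology of pointwise convergence. -/
def SCp (X Y : Type*) [TopologicalSpace X] [TopologicalSpace Y] : Submodule ℝ (X × Y → ℝ) where
  carrier := {f | SepCont f}
  add_mem' hf hg := ⟨fun x => (hf.1 x).add (hg.1 x), fun y => (hf.2 y).add (hg.2 y)⟩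
  zero_mem' := ⟨fun _ => continuous_const, fun _ => continuous_const⟩
  smul_mem' c f hf := ⟨fun x => (hf.1 x).const_smul c, fun y => (hf.2 y).const_smul c⟩

/-- The topology `σ` on `X × Y`: the coarsest topology making every separately continuous
real-valued function on `X × Y` continuous. -/
def sigmaTop (X Y : Type*) [TopologicalSpace X] [TopologicalSpace Y] :
    TopologicalSpace (X × Y) :=
  ⨅ f : {f : X × Y → ℝ // SepCont f}, TopologicalSpace.induced f.1 inferInstance

/-- The action of a finite linear combination `μ = Σ_z μ(z)·δ_z` of Dirac functionals
on a function `f`. -/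
noncomputable def finComboApply {Z : Type*} (μ : Z →₀ ℝ) (f : Z → ℝ) : ℝ :=
  μ.sum fun z a => a * f z

/-- `μ` is a JN-sequence on the topological space `Z`: each `μ n` is a finite linear
combination of Dirac functionals of norm `Σ_z |μ n z| = 1`, and `μ n (f) → 0` for every
continuous `f : Z → ℝ`. -/
def IsJNSeq (Z : Type*) [TopologicalSpace Z] (μ : ℕ → Z →₀ ℝ) : Prop :=
  (∀ n, ((μ n).sum fun _ a => |a|) = 1) ∧
    ∀ f : Z → ℝ, Continuous f → Tendsto (fun n => finComboApply (μ n) f) atTop (𝓝 0)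

/-- `Z` admits a JN-sequence. -/
def HasJNSeq (Z : Type*) [TopologicalSpace Z] : Prop := ∃ μ, IsJNSeq Z μ

/-- A space is pseudocompact if every continuous real-valued function on it is bounded. -/
def Pseudocompact (Z : Type*) [TopologicalSpace Z] : Prop :=
  ∀ f : Z → ℝ, Continuous f → Bornology.IsBounded (Set.range f)

/-- The action of a finite linear combination `Σ_{(x,y)} ν(x,y)·(δ_x ⊗ δ_y)` of tensor
products of Dirac functionals on an element of `C_p(X, C_p(Y))`. -/
noncomputable def tensorApply {X Y : Type*} [TopologicalSpace X] [TopologicalSpace Y]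
    (ν : (X × Y) →₀ ℝ) (f : ↥(Cp X ↥(Cp Y ℝ))) : ℝ :=
  ν.sum fun p a => a * (f.1 p.1).1 p.2

/-!
A linear homeomorphism maps von Neumann bounded sets to bounded sets. As `X × Y` is compact,
`C_p(X × Y)` is the union of its countably many sup-norm balls, each of which is bounded in the
pointwise topology. `C_p(X, C_p(Y))` consists of the separately continuous functions and is not
such a union: if `S n` is bounded, its members are bounded by some `M n` at a point `(p n, q n)`,
and with bumps `u n`, `v n` of pairwise disjoint supports peaking at `p n`, `q n`, the separately
continuous function `∑ₙ (|M n| + 1) u n ⊗ v n` lies in no `S n`.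
-/

open Function Bornology

theorem exists_seq_continuous_pairwise_disjoint_support (X : Type*) [TopologicalSpace X]
    [T35Space X] [Infinite X] :
    ∃ (p : ℕ → X) (u : ℕ → X → ℝ), (∀ n, Continuous (u n)) ∧ (∀ n, u n (p n) = 1) ∧
      Pairwise (Disjoint on fun n => support (u n)) := by
  obtain ⟨U, hU_inf, hU_open, hU_disj⟩ := exists_seq_infinite_isOpen_pairwise_disjoint X
  choose p hp using fun n => (hU_inf n).nonempty
  choose f hf hfp hfU using fun n =>
    completelyRegularSpace_iff_isOpen.mp inferInstance (p n) (U n) (hU_open n) (hp n)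
  have hsupp : ∀ n, support (fun x => 1 - (f n x : ℝ)) ⊆ U n := fun n x hx => by
    by_contra hxU
    exact hx (by simp [hfU n hxU])
  refine ⟨p, fun n x => 1 - f n x, fun n => continuous_const.sub
    (continuous_subtype_val.comp (hf n)), fun n => by simp [hfp n], ?_⟩
  exact fun m n hmn => (hU_disj hmn).mono (hsupp m) (hsupp n)

theorem exists_forall_ne_eq_zero_of_pairwise_disjoint_support {ι X M : Type*} [Nonempty ι] [Zero M]
    {u : ι → X → M} (hu : Pairwise (Disjoint on fun i => support (u i))) (x : X) :
    ∃ i, ∀ j ≠ i, u j x = 0 := by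
  by_cases h : ∃ i, u i x ≠ 0
  · obtain ⟨i, hi⟩ := h
    refine ⟨i, fun j hji => ?_⟩
    by_contra hj
    exact Set.disjoint_left.mp (hu hji) hj hi
  · push Not at h
    exact ⟨Classical.arbitrary ι, fun j _ => h j⟩

theorem continuous_tsum_of_forall_ne_eq_zero {ι X : Type*} [TopologicalSpace X]
    {g : ι → X → ℝ} {i : ι} (hg : Continuous (g i)) (h : ∀ j ≠ i, g j = 0) :
    Continuous fun x => ∑' j, g j x := by
  have : (fun x => ∑' j, g j x) = g i :=
    funext fun x => tsum_eq_single i fun j hj => congrFun (h j hj) x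
  rwa [this]

theorem sepCont_tsum_mul {X Y : Type*} [TopologicalSpace X] [TopologicalSpace Y]
    {u : ℕ → X → ℝ} {v : ℕ → Y → ℝ} (hu : ∀ n, Continuous (u n)) (hv : ∀ n, Continuous (v n))
    (hu_disj : Pairwise (Disjoint on fun n => support (u n)))
    (hv_disj : Pairwise (Disjoint on fun n => support (v n))) (c : ℕ → ℝ) :
    SepCont fun z : X × Y => ∑' n, c n * u n z.1 * v n z.2 := by
  refine ⟨fun x => ?_, fun y => ?_⟩
  · obtain ⟨k, hk⟩ := exists_forall_ne_eq_zero_of_pairwise_disjoint_support hu_disj x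
    exact continuous_tsum_of_forall_ne_eq_zero (g := fun n y => c n * u n x * v n y)
      ((hv k).const_mul _) fun n hn => funext fun y => by simp [hk n hn]
  · obtain ⟨k, hk⟩ := exists_forall_ne_eq_zero_of_pairwise_disjoint_support hv_disj y
    exact continuous_tsum_of_forall_ne_eq_zero (g := fun n x => c n * u n x * v n y)
      (((hu k).const_mul _).mul_const _) fun n hn => funext fun x => by simp [hk n hn]

theorem SepCont.exists_Cp_Cp {X Y : Type*} [TopologicalSpace X] [TopologicalSpace Y]
    {f : X × Y → ℝ} (hf : SepCont f) :
    ∃ F : ↥(Cp X ↥(Cp Y ℝ)), ∀ x y, ((F : X → ↥(Cp Y ℝ)) x : Y → ℝ) y = f (x, y) :=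
  ⟨⟨fun x => ⟨fun y => f (x, y), hf.1 x⟩,
    Continuous.subtype_mk (continuous_pi hf.2) _⟩, fun _ _ => rfl⟩

theorem isVonNBounded_Cp_of_forall_abs_le (X : Type*) [TopologicalSpace X] (r : ℝ) :
    IsVonNBounded ℝ {f : ↥(Cp X ℝ) | ∀ x, |(f : X → ℝ) x| ≤ r} := by
  refine isVonNBounded_of_smul_tendsto_zero (ε := fun n : ℕ => 1 / ((n : ℝ) + 1))
    (l := atTop) (Eventually.of_forall fun n => by positivity) fun f hf => ?_
  refine tendsto_subtype_rng.mpr (tendsto_pi_nhds.mpr fun x => ?_)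
  refine squeeze_zero_norm (a := fun n : ℕ => 1 / ((n : ℝ) + 1) * r) (fun n => ?_) ?_
  · have hn : (0 : ℝ) ≤ 1 / ((n : ℝ) + 1) := by positivity
    simpa [abs_mul, abs_of_nonneg (n.cast_add_one_pos (α := ℝ)).le]
      using mul_le_mul_of_nonneg_left (hf n x) hn
  · simpa using tendsto_one_div_add_atTop_nhds_zero_nat.mul_const r

theorem exists_abs_le_of_isVonNBounded {E : Type*} [TopologicalSpace E] [AddCommGroup E]
    [Module ℝ E] (φ : E →L[ℝ] ℝ) {S : Set E} (hS : IsVonNBounded ℝ S) :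
    ∃ M, ∀ f ∈ S, |φ f| ≤ M := by
  obtain ⟨M, hM⟩ := isBounded_iff_forall_norm_le.mp
    ((NormedSpace.isVonNBounded_iff ℝ).mp (hS.image φ))
  exact ⟨M, fun f hf => hM _ ⟨f, hf, rfl⟩⟩

def SigmaVonNBounded (E : Type*) [TopologicalSpace E] [AddCommGroup E] [Module ℝ E] : Prop :=
  ∃ S : ℕ → Set E, (∀ n, IsVonNBounded ℝ (S n)) ∧ ⋃ n, S n = Set.univ

theorem SigmaVonNBounded.map {E F : Type*} [TopologicalSpace E] [AddCommGroup E] [Module ℝ E]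
    [TopologicalSpace F] [AddCommGroup F] [Module ℝ F] (h : SigmaVonNBounded E)
    (f : E →L[ℝ] F) (hf : Surjective f) : SigmaVonNBounded F := by
  obtain ⟨S, hS, hcov⟩ := h
  refine ⟨fun n => f '' S n, fun n => (hS n).image f, ?_⟩
  rw [← Set.image_iUnion, hcov, Set.image_univ, hf.range_eq]

theorem CompactSpace.pseudocompact (Z : Type*) [TopologicalSpace Z] [CompactSpace Z] :
    Pseudocompact Z :=
  fun _ hf => (isCompact_range hf).isBounded

theorem Pseudocompact.sigmaVonNBounded_Cp {Z : Type*} [TopologicalSpace Z]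
    (hZ : Pseudocompact Z) : SigmaVonNBounded ↥(Cp Z ℝ) := by
  refine ⟨fun n : ℕ => {f : ↥(Cp Z ℝ) | ∀ z, |(f : Z → ℝ) z| ≤ n},
    fun n => isVonNBounded_Cp_of_forall_abs_le Z n, Set.eq_univ_of_forall fun f => ?_⟩
  obtain ⟨C, hC⟩ := isBounded_iff_forall_norm_le.mp (hZ f f.2)
  obtain ⟨n, hn⟩ := exists_nat_ge C
  exact Set.mem_iUnion.mpr ⟨n, fun z => (hC _ ⟨z, rfl⟩).trans hn⟩

theorem not_sigmaVonNBounded_Cp_Cp (X Y : Type*) [TopologicalSpace X] [T35Space X] [Infinite X]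
    [TopologicalSpace Y] [T35Space Y] [Infinite Y] :
    ¬ SigmaVonNBounded ↥(Cp X ↥(Cp Y ℝ)) := by
  rintro ⟨S, hS, hcov⟩
  obtain ⟨p, u, hu, hup, hu_disj⟩ := exists_seq_continuous_pairwise_disjoint_support X
  obtain ⟨q, v, hv, hvq, hv_disj⟩ := exists_seq_continuous_pairwise_disjoint_support Y
  choose M hM using fun n => exists_abs_le_of_isVonNBounded
    ((ContinuousLinearMap.proj (q n)).comp ((Cp Y ℝ).subtypeL.comp
      ((ContinuousLinearMap.proj (p n)).comp (Cp X ↥(Cp Y ℝ)).subtypeL))) (hS n)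
  obtain ⟨F, hF⟩ := (sepCont_tsum_mul hu hv hu_disj hv_disj fun n => |M n| + 1).exists_Cp_Cp
  obtain ⟨n, hn⟩ := Set.mem_iUnion.mp (hcov ▸ Set.mem_univ F)
  have hdiag : ((F : X → ↥(Cp Y ℝ)) (p n) : Y → ℝ) (q n) = |M n| + 1 := by
    rw [hF, tsum_eq_single n fun k hk => ?_]
    · simp [hup n, hvq n]
    · have hpn : p n ∉ support (u k) :=
        Set.disjoint_right.mp (hu_disj hk) (by simp [hup n])
      simp [notMem_support.mp hpn]
  have hbound : |((F : X → ↥(Cp Y ℝ)) (p n) : Y → ℝ) (q n)| ≤ M n := hM n F hn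
  rw [hdiag] at hbound
  linarith [le_abs_self (M n), abs_le.mp hbound]

/-- If `X` and `Y` are infinite compact Hausdorff spaces, then
`C_p(X×Y)` is not linearly homeomorphic to `C_p(X, C_p(Y))`. -/
theorem statement6 (X Y : Type*) [TopologicalSpace X] [CompactSpace X] [T2Space X]
    [Infinite X] [TopologicalSpace Y] [CompactSpace Y] [T2Space Y] [Infinite Y] :
    ¬ Nonempty (↥(Cp (X × Y) ℝ) ≃L[ℝ] ↥(Cp X ↥(Cp Y ℝ))) := by
  rintro ⟨e⟩
  exact not_sigmaVonNBounded_Cp_Cp X Y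
    ((CompactSpace.pseudocompact (X × Y)).sigmaVonNBounded_Cp.map e e.surjective)
end

section
/- Let E be a real normed space and X a nonempty Tychonoff space. Then the topology of pointwise convergence on C_p(X,E) coincides with the weak topology of the topological vector space C_p(X,E) (the topology σ(C_p(X,E), C_p(X,E)') induced by its topological dual) if and only if E is finite-dimensional. -/
/-!
The pointwise topology of `C_p(X, E)` is the initial topology of the evaluations
`f ↦ f x` into `E`. When `E` is finite-dimensional its topology is the initial topology of its
coordinate functionals, so the pointwise topology is generated by the continuous linear
functionals `f ↦ ℓ (f x)` and is therefore weak.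

Conversely, a weak neighbourhood of `0` contains the common kernel of finitely many continuous
functionals. If the weak topology is the pointwise one, some such kernel is mapped by the
evaluation at a point `x₀` into the unit ball of `E`; being a subspace, it is mapped to `0`.
Since the evaluation is onto `E` (constant functions), `E` embeds linearly into the
finite-dimensional space `ℝ^s` determined by these functionals.
-/

open Filter Topology

set_option linter.unusedVariables false

theorem FiniteDimensional.of_surjective_of_ker_le {K V W U : Type*} [Field K] [AddCommGroup V]
    [Module K V] [AddCommGroup W] [Module K W] [AddCommGroup U] [Module K U]
    [FiniteDimensional K U] {T : V →ₗ[K] W} (hT : Function.Surjective T) {Φ : V →ₗ[K] U}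
    (h : LinearMap.ker Φ ≤ LinearMap.ker T) : FiniteDimensional K W := by
  obtain ⟨g, hg⟩ := T.exists_rightInverse_of_surjective (LinearMap.range_eq_top.2 hT)
  refine .of_injective (Φ ∘ₗ g) (LinearMap.ker_eq_bot.1 (LinearMap.ker_eq_bot'.2 fun w hw => ?_))
  simpa [← LinearMap.comp_apply, hg] using h hw

theorem eq_zero_of_forall_norm_smul_lt_one {𝕜 E : Type*} [NontriviallyNormedField 𝕜]
    [NormedAddCommGroup E] [NormedSpace 𝕜 E] {v : E} (h : ∀ c : 𝕜, ‖c • v‖ < 1) : v = 0 := by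
  by_contra hv
  obtain ⟨c, hc⟩ := NormedField.exists_lt_norm 𝕜 ‖v‖⁻¹
  have hpos : 0 < ‖v‖ := norm_pos_iff.2 hv
  have hlt := h c
  rw [norm_smul] at hlt
  nlinarith [inv_mul_cancel₀ hpos.ne']

abbrev dualWeakTopology (𝕜 F : Type*) [Semiring 𝕜] [TopologicalSpace 𝕜] [AddCommGroup F]
    [Module 𝕜 F] [TopologicalSpace F] : TopologicalSpace F :=
  ⨅ φ : F →L[𝕜] 𝕜, TopologicalSpace.induced φ inferInstance

section DualWeakTopology

variable {𝕜 F G : Type*} [Ring 𝕜] [TopologicalSpace 𝕜]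
  [AddCommGroup F] [Module 𝕜 F] [TopologicalSpace F]
  [AddCommGroup G] [Module 𝕜 G] [TopologicalSpace G]

theorem le_dualWeakTopology : ‹TopologicalSpace F› ≤ dualWeakTopology 𝕜 F :=
  le_iInf fun φ => continuous_iff_le_induced.1 φ.continuous

theorem ContinuousLinearMap.dualWeakTopology_le_induced (T : F →L[𝕜] G) :
    dualWeakTopology 𝕜 F ≤ TopologicalSpace.induced T (dualWeakTopology 𝕜 G) := by
  unfold dualWeakTopology
  rw [induced_iInf]
  exact le_iInf fun φ =>
    (iInf_le _ (φ.comp T)).trans_eq (induced_compose (f := T) (g := φ)).symm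

theorem dualWeakTopology_self : dualWeakTopology 𝕜 𝕜 = ‹TopologicalSpace 𝕜› :=
  le_antisymm ((iInf_le _ (ContinuousLinearMap.id 𝕜 𝕜)).trans_eq induced_id) le_dualWeakTopology

theorem ContinuousLinearEquiv.dualWeakTopology_eq (e : F ≃L[𝕜] G)
    (hG : dualWeakTopology 𝕜 G = ‹TopologicalSpace G›) :
    dualWeakTopology 𝕜 F = ‹TopologicalSpace F› := by
  refine le_antisymm ?_ le_dualWeakTopology
  have h := e.toContinuousLinearMap.dualWeakTopology_le_induced
  rw [hG] at h
  exact h.trans_eq e.toHomeomorph.induced_eq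

theorem Submodule.dualWeakTopology_eq (hF : dualWeakTopology 𝕜 F = ‹TopologicalSpace F›)
    (S : Submodule 𝕜 F) : dualWeakTopology 𝕜 S = (inferInstance : TopologicalSpace S) := by
  refine le_antisymm ?_ le_dualWeakTopology
  have h := S.subtypeL.dualWeakTopology_le_induced
  rwa [hF] at h

theorem dualWeakTopology_pi_eq {ι : Type*} (hG : dualWeakTopology 𝕜 G = ‹TopologicalSpace G›) :
    dualWeakTopology 𝕜 (ι → G) = (inferInstance : TopologicalSpace (ι → G)) := by
  refine le_antisymm (le_iInf fun i => ?_) le_dualWeakTopology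
  have h := (ContinuousLinearMap.proj (R := 𝕜) (φ := fun _ : ι => G) i)
    |>.dualWeakTopology_le_induced
  rwa [hG] at h

theorem exists_finset_iInf_ker_subset_of_mem_nhds_zero {U : Set F}
    (hU : U ∈ @nhds F (dualWeakTopology 𝕜 F) 0) :
    ∃ s : Finset (F →L[𝕜] 𝕜),
      ((⨅ φ : s, LinearMap.ker ((φ : F →L[𝕜] 𝕜) : F →ₗ[𝕜] 𝕜) : Submodule 𝕜 F) : Set F) ⊆ U := by
  unfold dualWeakTopology at hU
  rw [_root_.nhds_iInf, Filter.mem_iInf] at hU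
  obtain ⟨I, hI, V, hV, rfl⟩ := hU
  refine ⟨hI.toFinset, fun f hf => Set.mem_iInter.2 fun φ => ?_⟩
  obtain ⟨W, hW, hWV⟩ := Filter.mem_comap.1 (nhds_induced (a := 0) (f := φ.1) ▸ hV φ)
  apply hWV
  have hφf : (φ : F →L[𝕜] 𝕜) f = 0 :=
    (Submodule.mem_iInf _).1 hf ⟨φ, hI.mem_toFinset.2 φ.2⟩
  simpa [Set.mem_preimage, hφf] using mem_of_mem_nhds hW

end DualWeakTopology

theorem dualWeakTopology_eq_of_finiteDimensional {𝕜 E : Type*} [NontriviallyNormedField 𝕜]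
    [CompleteSpace 𝕜] [AddCommGroup E] [Module 𝕜 E] [TopologicalSpace E]
    [IsTopologicalAddGroup E] [ContinuousSMul 𝕜 E] [T2Space E] [FiniteDimensional 𝕜 E] :
    dualWeakTopology 𝕜 E = ‹TopologicalSpace E› :=
  (Module.finBasis 𝕜 E).equivFunL.dualWeakTopology_eq
    (dualWeakTopology_pi_eq dualWeakTopology_self)

theorem FiniteDimensional.of_dualWeakTopology_eq {𝕜 F E : Type*} [NontriviallyNormedField 𝕜]
    [AddCommGroup F] [Module 𝕜 F] [TopologicalSpace F] [NormedAddCommGroup E] [NormedSpace 𝕜 E]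
    (hF : dualWeakTopology 𝕜 F = ‹TopologicalSpace F›) {T : F →L[𝕜] E}
    (hT : Function.Surjective T) : FiniteDimensional 𝕜 E := by
  have hU : T ⁻¹' Metric.ball 0 1 ∈ @nhds F (dualWeakTopology 𝕜 F) 0 := by
    rw [hF]
    exact T.continuous.continuousAt.preimage_mem_nhds
      (by simpa using Metric.ball_mem_nhds (0 : E) one_pos)
  obtain ⟨s, hs⟩ := exists_finset_iInf_ker_subset_of_mem_nhds_zero hU
  refine .of_surjective_of_ker_le (T := (T : F →ₗ[𝕜] E)) hT
    (Φ := LinearMap.pi fun φ : s => ((φ : F →L[𝕜] 𝕜) : F →ₗ[𝕜] 𝕜)) fun f hf => ?_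
  rw [LinearMap.ker_pi] at hf
  exact eq_zero_of_forall_norm_smul_lt_one fun c => by simpa using hs (Submodule.smul_mem _ c hf)

theorem statement7_general (X : Type*) [TopologicalSpace X] [Nonempty X]
    (E : Type*) [NormedAddCommGroup E] [NormedSpace ℝ E] :
    (⨅ φ : ↥(Cp X E) →L[ℝ] ℝ, TopologicalSpace.induced (fun f => φ f) inferInstance)
        = (inferInstance : TopologicalSpace ↥(Cp X E))
      ↔ FiniteDimensional ℝ E := by
  change dualWeakTopology ℝ (Cp X E) = _ ↔ _
  refine ⟨fun h => ?_, fun _ => (Cp X E).dualWeakTopology_eq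
    (dualWeakTopology_pi_eq dualWeakTopology_eq_of_finiteDimensional)⟩
  obtain ⟨x⟩ := ‹Nonempty X›
  exact .of_dualWeakTopology_eq h (T := (ContinuousLinearMap.proj x).comp (Cp X E).subtypeL)
    fun a => ⟨⟨fun _ => a, continuous_const⟩, rfl⟩

/-- For a real normed space `E` and a nonempty Tychonoff space `X`,
the topology of pointwise convergence on `C_p(X,E)` coincides with the weak topology
`σ(C_p(X,E), C_p(X,E)')` induced by its topological dual if and only if `E` is
finite-dimensional. -/
theorem statement7 (X : Type*) [TopologicalSpace X] [T35Space X] [Nonempty X]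
    (E : Type*) [NormedAddCommGroup E] [NormedSpace ℝ E] :
    (⨅ φ : ↥(Cp X E) →L[ℝ] ℝ, TopologicalSpace.induced (fun f => φ f) inferInstance)
        = (inferInstance : TopologicalSpace ↥(Cp X E))
      ↔ FiniteDimensional ℝ E :=
  statement7_general X E
end

section
/- Let X be an infinite Tychonoff space and κ an infinite cardinal number. Then the product space C_p(X)^κ (endowed with the product topology) contains a complemented copy of (c_0)_p if and only if C_p(X) contains a complemented copy of (c_0)_p. -/
open Filter Topology

set_option linter.unusedVariables false

/-!
A continuous linear map `R : E^κ → (c₀)_p` has continuous coordinate functionals, each of which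
depends on finitely many factors; a gliding hump argument shows that, beyond finitely many rows,
all of them depend on one finite set `G` of factors. If `R ∘ J = id`, then far out the identity of
`(c₀)_p` is, on the diagonal, a sum over `i ∈ G` of the maps `T_i` factoring through the `i`-th
factor `E`, so one `T_i` has diagonal entries of size `≥ 1/|G|` infinitely often. Along a suitable
subsequence the matrix of `T_i` is lower triangular with diagonal bounded below and geometrically
small off-diagonal part, so it is inverted on `(c₀)_p` by forward substitution, and `(c₀)_p` is a
retract of `E`.
-/

def IdFactorsThrough (F E : Type*) [TopologicalSpace E] [AddCommGroup E] [Module ℝ E]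
    [TopologicalSpace F] [AddCommGroup F] [Module ℝ F] : Prop :=
  ∃ (R : E →L[ℝ] F) (J : F →L[ℝ] E), ∀ x, R (J x) = x

section Retract

variable {E F : Type*} [TopologicalSpace E] [AddCommGroup E] [Module ℝ E]
  [TopologicalSpace F] [AddCommGroup F] [Module ℝ F]

theorem hasComplementedCopy_iff_idFactorsThrough [T2Space E] :
    HasComplementedCopy E F ↔ IdFactorsThrough F E := by
  constructor
  · rintro ⟨E₁, -, ⟨T⟩, P, hrange, hfix⟩
    have hmem : ∀ x, P x ∈ E₁ := fun x => by
      rw [← SetLike.mem_coe, ← hrange]; exact Set.mem_range_self x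
    refine ⟨(T : E₁ →L[ℝ] F).comp (P.codRestrict E₁ hmem),
      E₁.subtypeL.comp (T.symm : F →L[ℝ] E₁), fun y => ?_⟩
    have hP : P.codRestrict E₁ hmem (T.symm y) = T.symm y := Subtype.ext (hfix _ (T.symm y).2)
    simp [hP]
  · rintro ⟨R, J, hRJ⟩
    have hrange : Set.range J = {x | J (R x) = x} :=
      Set.Subset.antisymm (Set.range_subset_iff.2 fun y => by simp [hRJ]) fun x hx => ⟨R x, hx⟩
    refine ⟨LinearMap.range (J : F →ₗ[ℝ] E), ?_, ⟨?_⟩, J.comp R, ?_, ?_⟩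
    · rw [LinearMap.coe_range, ContinuousLinearMap.coe_coe, hrange]
      exact isClosed_eq (J.continuous.comp R.continuous) continuous_id
    · refine ContinuousLinearEquiv.equivOfInverse (R.comp (Submodule.subtypeL _))
        (J.codRestrict _ fun y => LinearMap.mem_range_self _ y) ?_ hRJ
      rintro ⟨_, y, rfl⟩
      exact Subtype.ext (by simp [hRJ])
    · rw [LinearMap.coe_range, ContinuousLinearMap.coe_coe, ContinuousLinearMap.coe_comp]
      exact (Function.LeftInverse.surjective hRJ).range_comp J
    · rintro _ ⟨y, rfl⟩
      simp [hRJ]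

theorem IdFactorsThrough.pi {ι : Type*} [Nonempty ι] (h : IdFactorsThrough F E) :
    IdFactorsThrough F (ι → E) := by
  obtain ⟨R, J, hRJ⟩ := h
  exact ⟨R.comp (ContinuousLinearMap.proj (Classical.arbitrary ι)),
    ContinuousLinearMap.pi fun _ => J, hRJ⟩

end Retract

section FiniteDependence

variable {ι : Type*} {M : ι → Type*} [∀ i, TopologicalSpace (M i)] [∀ i, AddCommGroup (M i)]
  [∀ i, Module ℝ (M i)]

/-- A basic neighbourhood of `0` in a product constrains only finitely many coordinates, and a
functional bounded on it vanishes on the subspace where those coordinates vanish. -/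
theorem exists_finset_forall_eq_zero_of_isInducing {E : Type*} [TopologicalSpace E]
    [AddCommGroup E] [Module ℝ E] (f : E →ₗ[ℝ] ∀ i, M i) (hf : IsInducing f) (φ : E →L[ℝ] ℝ) :
    ∃ S : Finset ι, ∀ x, (∀ i ∈ S, f x i = 0) → φ x = 0 := by
  have hball : φ ⁻¹' Set.Ioo (-1) 1 ∈ 𝓝 (0 : E) :=
    φ.continuous.continuousAt.preimage_mem_nhds (by simpa using Ioo_mem_nhds (by norm_num) one_pos)
  rw [hf.nhds_eq_comap, map_zero, nhds_pi, Filter.mem_comap] at hball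
  obtain ⟨W, hW, hWφ⟩ := hball
  obtain ⟨I, hI, t, ht, hIt⟩ := Filter.mem_pi.1 hW
  refine ⟨hI.toFinset, fun x hx => by_contra fun hφx => ?_⟩
  have hmem : f ((φ x)⁻¹ • x) ∈ I.pi t := fun i hi => by
    simpa [hx i (hI.mem_toFinset.2 hi)] using mem_of_mem_nhds (ht i)
  simpa [hφx] using hWφ (hIt hmem)

theorem ContinuousLinearMap.exists_finset_apply_eq_sum_single [DecidableEq ι]
    (φ : (∀ i, M i) →L[ℝ] ℝ) :
    ∃ S : Finset ι, ∀ T, S ⊆ T → ∀ g, φ g = ∑ i ∈ T, φ (Pi.single i (g i)) := by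
  obtain ⟨S, hS⟩ := exists_finset_forall_eq_zero_of_isInducing LinearMap.id IsInducing.id φ
  refine ⟨S, fun T hST g => ?_⟩
  have hvan : φ (g - ∑ i ∈ T, Pi.single i (g i)) = 0 :=
    hS _ fun i hi => by simp [Finset.sum_pi_single, hST hi]
  rwa [map_sub, sub_eq_zero, map_sum] at hvan

theorem ContinuousLinearMap.finite_setOf_apply_single_ne_zero [DecidableEq ι]
    (φ : (∀ i, M i) →L[ℝ] ℝ) : {i | ∃ m, φ (Pi.single i m) ≠ 0}.Finite := by
  obtain ⟨S, hS⟩ := φ.exists_finset_apply_eq_sum_single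
  refine S.finite_toSet.subset fun i ⟨m, hm⟩ => by_contra fun hi => hm ?_
  rw [hS S subset_rfl]
  exact Finset.sum_eq_zero fun i' hi' => by
    rw [Pi.single_eq_of_ne (ne_of_mem_of_not_mem hi' hi), Pi.single_zero, map_zero]

theorem ContinuousLinearMap.apply_eq_sum_single_of_apply_single_eq_zero [DecidableEq ι]
    (φ : (∀ i, M i) →L[ℝ] ℝ) {G : Finset ι} (hG : ∀ i ∉ G, ∀ m, φ (Pi.single i m) = 0)
    (g : ∀ i, M i) : φ g = ∑ i ∈ G, φ (Pi.single i (g i)) := by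
  obtain ⟨S, hS⟩ := φ.exists_finset_apply_eq_sum_single
  rw [hS (G ∪ S) Finset.subset_union_right]
  exact (Finset.sum_subset Finset.subset_union_left fun i _ hi => hG i hi _).symm

end FiniteDependence

theorem hasSum_pi_single_extend {α ι M : Type*} [AddCommMonoid M] [TopologicalSpace M]
    [DecidableEq ι] {f : α → ι} (hf : Function.Injective f) (x : α → M) :
    HasSum (fun a => Pi.single (f a) (x a)) (Function.extend f x 0) := by
  refine Pi.hasSum.2 fun i => ?_
  by_cases hi : ∃ a, f a = i
  · obtain ⟨a, rfl⟩ := hi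
    rw [hf.extend_apply]
    convert hasSum_single (f := fun b => (Pi.single (f b) (x b) : ι → M) (f a)) a
      fun b hb => by rw [Pi.single_apply, if_neg (hf.ne hb.symm)]
    simp
  · rw [Function.extend_apply' _ _ _ hi, Pi.zero_apply]
    convert hasSum_zero with a
    exact Pi.single_eq_of_ne (fun h => hi ⟨a, h.symm⟩) _

theorem tendsto_extend_zero {M : Type*} [Zero M] [TopologicalSpace M] {n : ℕ → ℕ}
    (hn : StrictMono n) {x : ℕ → M}
    (hx : Tendsto x atTop (𝓝 0)) : Tendsto (Function.extend n x 0) atTop (𝓝 0) := by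
  intro U hU
  obtain ⟨J, hJ⟩ := mem_atTop_sets.1 (hx hU)
  refine mem_atTop_sets.2 ⟨n J, fun s hs => ?_⟩
  by_cases h : ∃ j, n j = s
  · obtain ⟨j, rfl⟩ := h
    simpa [hn.injective.extend_apply] using hJ j (hn.le_iff_le.1 hs)
  · simpa [Function.extend_apply' _ _ _ h] using mem_of_mem_nhds hU

namespace c0p

theorem eventually_abs_le (x : c0p) {δ : ℝ} (hδ : 0 < δ) :
    ∀ᶠ t in atTop, |(x : ℕ → ℝ) t| ≤ δ :=
  x.2.abs.eventually_le_const (by simpa using hδ)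

def single (n : ℕ) : c0p :=
  ⟨Pi.single n 1, tendsto_const_nhds.congr' <|
    (eventually_ne_atTop n).mono fun _ h => by simp [h]⟩

@[simp] theorem coe_single (n : ℕ) : (single n : ℕ → ℝ) = Pi.single n 1 := rfl

def coord (t : ℕ) : c0p →L[ℝ] ℝ := (ContinuousLinearMap.proj t).comp c0p.subtypeL

@[simp] theorem coord_apply (t : ℕ) (x : c0p) : coord t x = (x : ℕ → ℝ) t := rfl

theorem eventually_apply_single_eq_zero (φ : c0p →L[ℝ] ℝ) :
    ∀ᶠ n in atTop, φ (single n) = 0 := by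
  obtain ⟨S, hS⟩ :=
    exists_finset_forall_eq_zero_of_isInducing c0p.subtype IsInducing.subtypeVal φ
  rw [← Nat.cofinite_eq_atTop]
  exact S.finite_toSet.eventually_cofinite_notMem.mono fun n hn =>
    hS _ fun i hi => by simp [single, ne_of_mem_of_not_mem hi hn]

def subseq {n : ℕ → ℕ} (hn : StrictMono n) : c0p →L[ℝ] c0p :=
  (ContinuousLinearMap.pi fun j => coord (n j)).codRestrict c0p fun x => x.2.comp hn.tendsto_atTop

noncomputable def spread {n : ℕ → ℕ} (hn : StrictMono n) : c0p →L[ℝ] c0p where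
  toLinearMap := (Function.ExtendByZero.linearMap ℝ n ∘ₗ c0p.subtype).codRestrict c0p
    fun x => tendsto_extend_zero hn x.2
  cont := by
    refine continuous_induced_rng.2 (continuous_pi fun s => ?_)
    change Continuous fun x : c0p => Function.extend n (x : ℕ → ℝ) 0 s
    by_cases h : ∃ j, n j = s
    · obtain ⟨j, rfl⟩ := h
      simp_rw [hn.injective.extend_apply]
      exact (continuous_apply j).comp continuous_subtype_val
    · simp_rw [Function.extend_apply' _ _ _ h]
      exact continuous_const

theorem hasSum_spread {n : ℕ → ℕ} (hn : StrictMono n) (x : c0p) :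
    HasSum (fun m => (x : ℕ → ℝ) m • single (n m)) (spread hn x) := by
  rw [← IsInducing.hasSum_iff (g := c0p.subtype) IsInducing.subtypeVal]
  change HasSum _ (Function.extend n (x : ℕ → ℝ) 0)
  convert hasSum_pi_single_extend hn.injective (x : ℕ → ℝ) using 1
  funext m
  simp [← Pi.single_smul']

end c0p

section ForwardSubstitution

open Finset

variable (d : ℕ → ℝ) (S : ℕ → ℕ → ℝ)

noncomputable def forwardSubst : ℕ → (ℕ → ℝ) →L[ℝ] ℝ
  | j => (d j)⁻¹ • (ContinuousLinearMap.proj j - ∑ m : Fin j, S j m • forwardSubst m)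

theorem forwardSubst_apply (j : ℕ) (y : ℕ → ℝ) :
    forwardSubst d S j y = (d j)⁻¹ * (y j - ∑ m ∈ range j, S j m * forwardSubst d S m y) := by
  rw [forwardSubst]
  simp [Fin.sum_univ_eq_sum_range (fun m => S j m * forwardSubst d S m y)]

theorem forwardSubst_lowerTriangular {d} (hd : ∀ j, d j ≠ 0) (x : ℕ → ℝ) (j : ℕ) :
    forwardSubst d S j (fun i => d i * x i + ∑ m ∈ range i, S i m * x m) = x j := by
  induction j using Nat.strong_induction_on with
  | _ j ih =>
    have hprev : ∑ m ∈ range j, S j m * forwardSubst d S m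
        (fun i => d i * x i + ∑ m ∈ range i, S i m * x m) = ∑ m ∈ range j, S j m * x m :=
      sum_congr rfl fun m hm => by rw [ih m (mem_range.1 hm)]
    rw [forwardSubst_apply, hprev]
    field_simp [hd j]
    ring

variable {d S} {ε : ℝ} (hε : 0 < ε) (hd : ∀ j, ε ≤ |d j|)
  (hS : ∀ j m, m < j → |S j m| ≤ ε / 2 ^ (j + 1))
include hε hd hS

theorem abs_forwardSubst_le_of_forall_lt {y : ℕ → ℝ} {C : ℝ} (hC0 : 0 ≤ C) {j : ℕ}
    (hC : ∀ m < j, |forwardSubst d S m y| ≤ 2 * C / ε) :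
    |forwardSubst d S j y| ≤ (|y j| + j * C / 2 ^ j) / ε := by
  have hsum : |∑ m ∈ range j, S j m * forwardSubst d S m y| ≤ j * C / 2 ^ j :=
    calc |∑ m ∈ range j, S j m * forwardSubst d S m y|
        ≤ ∑ m ∈ range j, |S j m * forwardSubst d S m y| := abs_sum_le_sum_abs _ _
      _ ≤ ∑ _m ∈ range j, ε / 2 ^ (j + 1) * (2 * C / ε) := sum_le_sum fun m hm => by
          rw [abs_mul]
          exact mul_le_mul (hS j m (mem_range.1 hm)) (hC m (mem_range.1 hm)) (abs_nonneg _)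
            (by positivity)
      _ = j * C / 2 ^ j := by
          rw [sum_const, card_range, nsmul_eq_mul]
          field_simp
          ring
  rw [forwardSubst_apply, abs_mul, abs_inv, inv_mul_eq_div]
  exact div_le_div₀ (by positivity) ((abs_sub _ _).trans (by gcongr)) hε (hd j)

theorem abs_forwardSubst_le {y : ℕ → ℝ} {C : ℝ} (hC0 : 0 ≤ C) (hy : ∀ i, |y i| ≤ C) (j : ℕ) :
    |forwardSubst d S j y| ≤ 2 * C / ε := by
  induction j using Nat.strong_induction_on with
  | _ j ih =>
    refine (abs_forwardSubst_le_of_forall_lt hε hd hS hC0 ih).trans ?_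
    have hj : (j : ℝ) * C / 2 ^ j ≤ C := div_le_of_le_mul₀ (by positivity) hC0 <| by
      rw [mul_comm]; gcongr; exact_mod_cast Nat.lt_two_pow_self.le
    rw [two_mul]
    gcongr
    exact hy j

theorem tendsto_forwardSubst {y : ℕ → ℝ} (hy : Tendsto y atTop (𝓝 0)) :
    Tendsto (fun j => forwardSubst d S j y) atTop (𝓝 0) := by
  have hy' : Tendsto (fun i => |y i|) atTop (𝓝 0) := by simpa using hy.abs
  obtain ⟨C, hC⟩ := hy'.bddAbove_range
  have hyC : ∀ i, |y i| ≤ C := fun i => hC ⟨i, rfl⟩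
  have hC0 : 0 ≤ C := (abs_nonneg _).trans (hyC 0)
  have hgeom : Tendsto (fun j : ℕ => (j : ℝ) * C / 2 ^ j) atTop (𝓝 0) := by
    convert (tendsto_self_mul_const_pow_of_lt_one (r := 1 / 2) (by norm_num)
      (by norm_num)).mul_const C using 1
    · ext j; rw [one_div, inv_pow]; ring
    · simp
  refine squeeze_zero_norm (fun j => ?_) (by simpa using (hy'.add hgeom).div_const ε)
  exact abs_forwardSubst_le_of_forall_lt hε hd hS hC0 fun m _ =>
    abs_forwardSubst_le hε hd hS hC0 hyC m

end ForwardSubstitution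

theorem c0p.exists_leftInverse_of_lowerTriangular (L : c0p →L[ℝ] c0p) {ε : ℝ} (hε : 0 < ε)
    {d : ℕ → ℝ} (hd : ∀ j, ε ≤ |d j|) {S : ℕ → ℕ → ℝ}
    (hS : ∀ j m, m < j → |S j m| ≤ ε / 2 ^ (j + 1))
    (hL : ∀ x j, (L x : ℕ → ℝ) j =
      d j * (x : ℕ → ℝ) j + ∑ m ∈ Finset.range j, S j m * (x : ℕ → ℝ) m) :
    ∃ H : c0p →L[ℝ] c0p, ∀ x, H (L x) = x := by
  refine ⟨((ContinuousLinearMap.pi (forwardSubst d S)).comp c0p.subtypeL).codRestrict c0p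
    fun y => tendsto_forwardSubst hε hd hS y.2, fun x => Subtype.ext (funext fun j => ?_)⟩
  change forwardSubst d S j (L x) = (x : ℕ → ℝ) j
  rw [show (L x : ℕ → ℝ) = _ from funext (hL x)]
  exact forwardSubst_lowerTriangular S (fun j => abs_pos.1 (hε.trans_le (hd j))) _ j

namespace c0p

variable {T : c0p →L[ℝ] c0p} {ε : ℝ}

/-- Each new index is taken so far out that the earlier rows, which depend on finitely many
coordinates, vanish on its column, and all columns up to the previous index are small in its row. -/
theorem exists_strictMono_lowerTriangular (hε : 0 < ε)
    (hT : ∃ᶠ n in atTop, ε ≤ |(T (single n) : ℕ → ℝ) n|) :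
    ∃ n : ℕ → ℕ, StrictMono n ∧ (∀ j, ε ≤ |(T (single (n j)) : ℕ → ℝ) (n j)|) ∧
      (∀ j m, m < j → |(T (single (n m)) : ℕ → ℝ) (n j)| ≤ ε / 2 ^ (j + 1)) ∧
      (∀ j m, j < m → (T (single (n m)) : ℕ → ℝ) (n j) = 0) := by
  have hnext : ∀ j a : ℕ, ∃ b, ε ≤ |(T (single b) : ℕ → ℝ) b| ∧ a < b ∧
      ∀ c ∈ Finset.range (a + 1), |(T (single c) : ℕ → ℝ) b| ≤ ε / 2 ^ (j + 1) ∧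
        (T (single b) : ℕ → ℝ) c = 0 := fun j a =>
    (hT.and_eventually ((eventually_gt_atTop a).and ((Finset.eventually_all _).2 fun c _ =>
      (eventually_abs_le (T (single c)) (by positivity)).and
        (eventually_apply_single_eq_zero ((coord c).comp T))))).exists
  choose next hdiag hlt hrow using hnext
  let n : ℕ → ℕ := fun j => Nat.rec (next 0 0) (fun j a => next (j + 1) a) j
  have hn_succ : ∀ j, n (j + 1) = next (j + 1) (n j) := fun j => rfl
  have hn_mono : StrictMono n := strictMono_nat_of_lt_succ fun j => hlt _ _
  refine ⟨n, hn_mono, fun j => ?_, fun j m hmj => ?_, fun j m hjm => ?_⟩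
  · cases j <;> exact hdiag _ _
  · obtain ⟨j, rfl⟩ : ∃ j', j = j' + 1 := Nat.exists_eq_succ_of_ne_zero (by omega)
    rw [hn_succ]
    exact (hrow _ _ _ (Finset.mem_range_succ_iff.2 (hn_mono.monotone (by omega)))).1
  · obtain ⟨m, rfl⟩ : ∃ m', m = m' + 1 := Nat.exists_eq_succ_of_ne_zero (by omega)
    rw [hn_succ]
    exact (hrow _ _ _ (Finset.mem_range_succ_iff.2 (hn_mono.monotone (by omega)))).2

theorem exists_comp_comp_eq_self_of_frequently_le_abs (hε : 0 < ε)
    (hT : ∃ᶠ n in atTop, ε ≤ |(T (single n) : ℕ → ℝ) n|) :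
    ∃ V W : c0p →L[ℝ] c0p, ∀ x, V (T (W x)) = x := by
  obtain ⟨n, hn, hdiag, hlower, hupper⟩ := exists_strictMono_lowerTriangular hε hT
  have hL : ∀ x j, ((subseq hn).comp (T.comp (spread hn)) x : ℕ → ℝ) j =
      (T (single (n j)) : ℕ → ℝ) (n j) * (x : ℕ → ℝ) j +
        ∑ m ∈ Finset.range j, (T (single (n m)) : ℕ → ℝ) (n j) * (x : ℕ → ℝ) m := by
    intro x j
    have hsum := (hasSum_spread hn x).mapL ((coord (n j)).comp T)
    change (coord (n j)).comp T (spread hn x) = _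
    rw [hsum.unique (hasSum_sum_of_ne_finset_zero (s := Finset.range (j + 1)) fun m hm => ?_)]
    · simp [Finset.sum_range_succ, add_comm, mul_comm]
    · simp [hupper j m (by simpa using hm)]
  obtain ⟨H, hH⟩ := exists_leftInverse_of_lowerTriangular _ hε hdiag hlower hL
  exact ⟨H.comp (subseq hn), spread hn, hH⟩

end c0p

theorem not_tendsto_zero_of_hasSum_unitLowerTriangular {a : ℕ → ℕ → ℝ} {b : ℕ → ℝ}
    (hsum : ∀ j, HasSum (a j) (b j)) (hdiag : ∀ j, a j j = 1)
    (hupper : ∀ j m, j < m → a j m = 0) (hlower : ∀ j m, m < j → |a j m| ≤ (1 / 2) ^ (m + 2)) :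
    ¬ Tendsto b atTop (𝓝 0) := by
  have hb : ∀ j, 1 / 2 ≤ |b j| := by
    intro j
    have hbj : b j = 1 + ∑ m ∈ Finset.range j, a j m := by
      rw [(hsum j).unique (hasSum_sum_of_ne_finset_zero (s := Finset.range (j + 1))
        fun m hm => hupper j m (by simpa using hm)), Finset.sum_range_succ, hdiag, add_comm]
    have htail : |∑ m ∈ Finset.range j, a j m| ≤ 1 / 2 :=
      calc |∑ m ∈ Finset.range j, a j m|
          ≤ ∑ m ∈ Finset.range j, |a j m| := Finset.abs_sum_le_sum_abs _ _
        _ ≤ ∑ m ∈ Finset.range j, (1 / 2 : ℝ) ^ (m + 2) :=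
          Finset.sum_le_sum fun m hm => hlower j m (Finset.mem_range.1 hm)
        _ = 1 / 4 * ∑ m ∈ Finset.range j, (1 / 2 : ℝ) ^ m := by
          rw [Finset.mul_sum]; congr 1 with m; ring
        _ ≤ 1 / 2 := by linarith [sum_geometric_two_le j]
    rw [hbj]
    linarith [le_abs_self (1 + ∑ m ∈ Finset.range j, a j m),
      neg_abs_le (∑ m ∈ Finset.range j, a j m)]
  intro h
  obtain ⟨j, hj⟩ := ((by simpa using h.abs : Tendsto (fun j => |b j|) atTop (𝓝 0)).eventually
    (gt_mem_nhds (by norm_num : (0 : ℝ) < 1 / 2))).exists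
  exact absurd (hb j) (not_le.2 hj)

section GlidingHump

variable {ι M : Type*} [TopologicalSpace M] [AddCommGroup M] [Module ℝ M] [DecidableEq ι]

theorem exists_glidingHump (R : (ι → M) →L[ℝ] c0p)
    (h : ∀ G : Finset ι, ∃ᶠ k in atTop, ∃ i ∉ G, ∃ w, (R (Pi.single i w) : ℕ → ℝ) k ≠ 0) :
    ∃ (k : ℕ → ℕ) (i : ℕ → ι) (v : ℕ → M), StrictMono k ∧ Function.Injective i ∧
      (∀ j, (R (Pi.single (i j) (v j)) : ℕ → ℝ) (k j) = 1) ∧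
      (∀ j m, j < m → ∀ w, (R (Pi.single (i m) w) : ℕ → ℝ) (k j) = 0) ∧
      (∀ j m, m < j → |(R (Pi.single (i m) (v m)) : ℕ → ℝ) (k j)| ≤ (1 / 2) ^ (m + 2)) := by
  have hstep : ∀ s : Finset ι × ℕ, ∃ k, s.2 ≤ k ∧ ∃ i ∉ s.1, ∃ v,
      (R (Pi.single i v) : ℕ → ℝ) k = 1 := by
    intro s
    obtain ⟨k, hk, i, hi, w, hw⟩ := (h s.1).forall_exists_of_atTop s.2
    refine ⟨k, hk, i, hi, ((R (Pi.single i w) : ℕ → ℝ) k)⁻¹ • w, ?_⟩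
    rw [Pi.single_smul', map_smul]
    exact inv_mul_cancel₀ hw
  choose kf hkf iF hiF vf hvf using hstep
  have hfin : ∀ k, {i | ∃ w, (R (Pi.single i w) : ℕ → ℝ) k ≠ 0}.Finite := fun k =>
    ((c0p.coord k).comp R).finite_setOf_apply_single_ne_zero
  choose thr hthr using fun (m : ℕ) (x : c0p) =>
    eventually_atTop.1 (c0p.eventually_abs_le x (by positivity : (0 : ℝ) < (1 / 2) ^ (m + 2)))
  -- the state after `j` humps: the coordinates used so far (by the humps and by their rows), and a
  -- row index beyond which all humps so far are small
  obtain ⟨st, hst⟩ : ∃ st : ℕ → Finset ι × ℕ, ∀ j, st (j + 1) =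
      ((st j).1 ∪ (hfin (kf (st j))).toFinset ∪ {iF (st j)},
        max (kf (st j) + 1) (thr j (R (Pi.single (iF (st j)) (vf (st j)))))) :=
    ⟨fun j => Nat.rec (∅, 0) (fun j s => (s.1 ∪ (hfin (kf s)).toFinset ∪ {iF s},
      max (kf s + 1) (thr j (R (Pi.single (iF s) (vf s)))))) j, fun j => rfl⟩
  have hmono : Monotone st := monotone_nat_of_le_succ fun j => by
    rw [hst]
    exact Prod.mk_le_mk.2 ⟨Finset.subset_union_left.trans Finset.subset_union_left,
      (hkf _).trans ((Nat.le_succ _).trans (le_max_left _ _))⟩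
  have hlater : ∀ m j, m < j → iF (st m) ∈ (st j).1 ∧ (hfin (kf (st m))).toFinset ⊆ (st j).1 ∧
      kf (st m) < (st j).2 ∧ thr m (R (Pi.single (iF (st m)) (vf (st m)))) ≤ (st j).2 := by
    intro m j hmj
    have hle := hmono (Nat.succ_le_of_lt hmj)
    rw [hst m, Prod.mk_le_mk] at hle
    exact ⟨hle.1 (Finset.mem_union_right _ (Finset.mem_singleton_self _)),
      (Finset.subset_union_right.trans Finset.subset_union_left).trans hle.1,
      (Nat.lt_succ_self _).trans_le ((le_max_left _ _).trans hle.2), (le_max_right _ _).trans hle.2⟩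
  refine ⟨fun j => kf (st j), fun j => iF (st j), fun j => vf (st j),
    fun m j hmj => (hlater m j hmj).2.2.1.trans_le (hkf _),
    Function.Injective.of_lt_imp_ne fun m j hmj hij => hiF (st j) (hij ▸ (hlater m j hmj).1),
    fun j => hvf _, fun j m hjm w => ?_,
    fun j m hmj => hthr _ _ _ ((hlater m j hmj).2.2.2.trans (hkf _))⟩
  by_contra hne
  exact hiF (st m) ((hlater j m hjm).2.1 ((hfin _).mem_toFinset.2 ⟨w, hne⟩))

theorem exists_finset_eventually_apply_single_eq_zero (R : (ι → M) →L[ℝ] c0p) :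
    ∃ G : Finset ι, ∀ᶠ k in atTop, ∀ i ∉ G, ∀ w, (R (Pi.single i w) : ℕ → ℝ) k = 0 := by
  by_contra hcon
  push Not at hcon
  obtain ⟨k, i, v, hk, hi, hdiag, hupper, hlower⟩ := exists_glidingHump R hcon
  have hg := hasSum_pi_single_extend hi v
  exact not_tendsto_zero_of_hasSum_unitLowerTriangular
    (fun j => hg.mapL ((c0p.coord (k j)).comp R)) hdiag (fun j m h => hupper j m h _) hlower
    ((R _).2.comp hk.tendsto_atTop)

theorem exists_finset_eventually_apply_eq_sum_single (R : (ι → M) →L[ℝ] c0p) :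
    ∃ G : Finset ι, ∀ᶠ k in atTop, ∀ g,
      (R g : ℕ → ℝ) k = ∑ i ∈ G, (R (Pi.single i (g i)) : ℕ → ℝ) k :=
  let ⟨G, hG⟩ := exists_finset_eventually_apply_single_eq_zero R
  ⟨G, hG.mono fun k hk g => ((c0p.coord k).comp R).apply_eq_sum_single_of_apply_single_eq_zero hk g⟩

end GlidingHump

theorem Finset.exists_frequently_inv_card_le_abs {α ι : Type*} {l : Filter α} {G : Finset ι}
    {a : ι → α → ℝ} (h : ∃ᶠ x in l, ∑ i ∈ G, a i x = 1) :
    ∃ i ∈ G, ∃ᶠ x in l, (G.card : ℝ)⁻¹ ≤ |a i x| := by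
  by_contra hcon
  push Not at hcon
  obtain ⟨x, hsum, hsmall⟩ := (h.and_eventually ((Finset.eventually_all G).2 hcon)).exists
  have hG : G.Nonempty := Finset.nonempty_iff_ne_empty.2 fun hG => by simp [hG] at hsum
  have : (1 : ℝ) < 1 :=
    calc (1 : ℝ) = |∑ i ∈ G, a i x| := by rw [hsum, abs_one]
      _ ≤ ∑ i ∈ G, |a i x| := Finset.abs_sum_le_sum_abs _ _
      _ < ∑ _i ∈ G, (G.card : ℝ)⁻¹ := Finset.sum_lt_sum_of_nonempty hG hsmall
      _ = 1 := by rw [Finset.sum_const, nsmul_eq_mul, mul_inv_cancel₀ (by simpa using hG.ne_empty)]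
  exact lt_irrefl _ this

theorem IdFactorsThrough.of_pi {ι M : Type*} [TopologicalSpace M] [AddCommGroup M] [Module ℝ M]
    (h : IdFactorsThrough c0p (ι → M)) : IdFactorsThrough c0p M := by
  classical
  obtain ⟨R, J, hRJ⟩ := h
  obtain ⟨G, hG⟩ := exists_finset_eventually_apply_eq_sum_single R
  have hsum : ∀ᶠ n in atTop, ∑ i ∈ G, (R (Pi.single i (J (c0p.single n) i)) : ℕ → ℝ) n = 1 :=
    hG.mono fun n hn => by rw [← hn, hRJ]; simp
  obtain ⟨i, hi, hfreq⟩ := G.exists_frequently_inv_card_le_abs hsum.frequently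
  let A := R.comp (ContinuousLinearMap.single ℝ (fun _ => M) i)
  let B := (ContinuousLinearMap.proj i).comp J
  obtain ⟨V, W, hVW⟩ := c0p.exists_comp_comp_eq_self_of_frequently_le_abs (T := A.comp B)
    (inv_pos.2 (Nat.cast_pos.2 (Finset.card_pos.2 ⟨i, hi⟩))) hfreq
  exact ⟨V.comp A, B.comp W, hVW⟩

theorem statement14_general (X : Type*) [TopologicalSpace X] (ι : Type*) [Infinite ι] :
    HasComplementedCopy (ι → ↥(Cp X ℝ)) ↥c0p ↔ HasComplementedCopy ↥(Cp X ℝ) ↥c0p := by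
  rw [hasComplementedCopy_iff_idFactorsThrough, hasComplementedCopy_iff_idFactorsThrough]
  exact ⟨IdFactorsThrough.of_pi, IdFactorsThrough.pi⟩

/-- Let `X` be an infinite Tychonoff space and `κ` an infinite cardinal,
realized as an infinite index type `ι`.  The product space `C_p(X)^κ` (with the product
topology) contains a complemented copy of `(c₀)_p` if and only if `C_p(X)` does. -/
theorem statement14 (X : Type*) [TopologicalSpace X] [T35Space X] [Infinite X]
    (ι : Type*) [Infinite ι] :
    HasComplementedCopy (ι → ↥(Cp X ℝ)) ↥c0p ↔ HasComplementedCopy ↥(Cp X ℝ) ↥c0p :=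
  statement14_general X ι
end
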